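/- arXiv:2112.07077 — 4 statements merged into one kernel-verified Lean document; each statement's English description precedes it below -/
import Mathlib

section
/- Let γ : ℤ → ℝ be a summable (absolutely summable) real sequence, f(ω) := (1/(2π)) ∑_{k∈ℤ} γ_k e^{-i k ω}, and 𝔉(λ) := ∫_0^λ f(ω) dω. Then Im 𝔉(λ) = 0 for every λ ∈ [0, π] if and only if γ_k = γ_{-k} for every k ∈ ℤ. -/
open Real MeasureTheory Set

/-! The imaginary part of `e^{-ikω}` is `-sin (kω)`, so `Im 𝔉 λ = -(1/2π) ∫₀^λ S` for the continuous
sine series `S ω = ∑ₖ γₖ sin (kω)`. If `γ` is even, the terms of `S` at `k` and `-k` cancel.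
Conversely, if `∫₀^λ S = 0` for all `λ ∈ [0, π]`, then `S = 0` on `[0, π]`, and integrating `S`
against `sin (mω)` over `[0, π]` isolates `(π/2)(γₘ - γ₋ₘ)`. -/

theorem Function.Odd.tsum_eq_zero {α β : Type*} [InvolutiveNeg α] [AddCommGroup β]
    [TopologicalSpace β] [IsTopologicalAddGroup β] [T2Space β] [IsAddTorsionFree β]
    {g : α → β} (hg : g.Odd) : ∑' a, g a = 0 :=
  self_eq_neg.mp <| by rw [← tsum_neg, ← tsum_comp_neg]; simp only [hg.eq]

theorem integral_zero_pi_cos_int_mul (n : ℤ) :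
    ∫ x in (0 : ℝ)..π, cos (n * x) = if n = 0 then π else 0 := by
  rcases eq_or_ne n 0 with rfl | hn
  · simp
  · rw [if_neg hn, intervalIntegral.integral_comp_mul_left cos (Int.cast_ne_zero.mpr hn)]
    simp [sin_int_mul_pi]

theorem integral_zero_pi_sin_int_mul_sin_int_mul (k : ℤ) {m : ℤ} (hm : m ≠ 0) :
    ∫ x in (0 : ℝ)..π, sin (k * x) * sin (m * x) =
      π / 2 * ((if k = m then 1 else 0) - if k = -m then 1 else 0) := by
  have product_to_sum : ∀ x : ℝ, sin (k * x) * sin (m * x) =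
      (cos (((k - m : ℤ) : ℝ) * x) - cos (((k + m : ℤ) : ℝ) * x)) / 2 := by
    intro x
    push_cast
    rw [sub_mul, add_mul, ← two_mul_sin_mul_sin]
    ring
  have hcos : ∀ n : ℤ, IntervalIntegrable (fun x => cos ((n : ℝ) * x)) volume 0 π := fun n =>
    (continuous_cos.comp (continuous_const.mul continuous_id)).intervalIntegrable _ _
  simp_rw [product_to_sum]
  rw [intervalIntegral.integral_div, intervalIntegral.integral_sub (hcos _) (hcos _),
    integral_zero_pi_cos_int_mul, integral_zero_pi_cos_int_mul]
  by_cases hkm : k = m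
  · simp [hkm, show m + m ≠ 0 by omega, show m ≠ -m by omega]
  by_cases hkm' : k = -m
  · simp [hkm', show -m - m ≠ 0 by omega, show -m ≠ m by omega, neg_div]
  · simp [hkm, hkm', sub_ne_zero.mpr hkm, show k + m ≠ 0 by omega]

theorem eqOn_zero_of_forall_intervalIntegral_eq_zero {E : Type*} [NormedAddCommGroup E]
    [NormedSpace ℝ E] [CompleteSpace E] {h : ℝ → E} (hh : Continuous h) {a b : ℝ} (hab : a < b)
    (H : ∀ t ∈ Icc a b, ∫ x in a..t, h x = 0) : EqOn h 0 (Icc a b) := by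
  have hIoo : EqOn h 0 (Ioo a b) := fun x hx => by
    have hconst : (fun t => ∫ x in a..t, h x) =ᶠ[nhds x] fun _ => (0 : E) := by
      filter_upwards [Ioo_mem_nhds hx.1 hx.2] with t ht using H t (Ioo_subset_Icc_self ht)
    exact ((hh.integral_hasStrictDerivAt a x).hasDerivAt.congr_of_eventuallyEq hconst.symm).unique
      (hasDerivAt_const x 0)
  simpa [closure_Ioo hab.ne] using hIoo.closure hh continuous_const

section SineSeries

variable {a : ℤ → ℝ}

noncomputable def sineSeries (a : ℤ → ℝ) (ω : ℝ) : ℝ := ∑' k : ℤ, a k * sin (k * ω)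

theorem abs_mul_sin_le (c x : ℝ) : |c * sin x| ≤ |c| := by
  rw [abs_mul]
  exact mul_le_of_le_one_right (abs_nonneg c) (abs_sin_le_one x)

theorem summable_mul_sin (ha : Summable fun k => |a k|) (ω : ℝ) :
    Summable fun k : ℤ => a k * sin (k * ω) :=
  .of_norm_bounded ha fun _ => abs_mul_sin_le _ _

theorem continuous_sineSeries (ha : Summable fun k => |a k|) : Continuous (sineSeries a) :=
  continuous_tsum (fun _ => by fun_prop) ha fun _ _ => abs_mul_sin_le _ _

theorem sineSeries_eq_zero_of_even (ha : a.Even) (ω : ℝ) : sineSeries a ω = 0 :=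
  Function.Odd.tsum_eq_zero fun k => by
    rw [ha.eq, Int.cast_neg, neg_mul, sin_neg, mul_neg]

theorem integral_sineSeries_mul_sin (ha : Summable fun k => |a k|) {m : ℤ} (hm : m ≠ 0) :
    ∫ x in (0 : ℝ)..π, sineSeries a x * sin (m * x) = π / 2 * (a m - a (-m)) := by
  have hterms : HasSum (fun k : ℤ => ∫ x in (0 : ℝ)..π, a k * sin (k * x) * sin (m * x))
      (∫ x in (0 : ℝ)..π, sineSeries a x * sin (m * x)) := by
    refine intervalIntegral.hasSum_integral_of_dominated_convergence (fun k _ => |a k|)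
      (fun k => by fun_prop) (fun k => .of_forall fun x _ => ?_)
      (.of_forall fun _ _ => ha) intervalIntegrable_const
      (.of_forall fun x _ => (summable_mul_sin ha x).hasSum.mul_right _)
    rw [Real.norm_eq_abs, abs_mul]
    exact (mul_le_of_le_one_right (abs_nonneg _) (abs_sin_le_one _)).trans (abs_mul_sin_le _ _)
  have horth : ∀ k : ℤ, ∫ x in (0 : ℝ)..π, a k * sin (k * x) * sin (m * x) =
      π / 2 * ((if k = m then a m else 0) - if k = -m then a (-m) else 0) := by
    intro k
    simp_rw [mul_assoc, intervalIntegral.integral_const_mul,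
      integral_zero_pi_sin_int_mul_sin_int_mul _ hm]
    split_ifs <;> simp_all [mul_comm]
  simp_rw [horth] at hterms
  exact hterms.unique (((hasSum_ite_eq m (a m)).sub (hasSum_ite_eq (-m) (a (-m)))).mul_left _)

theorem even_of_eqOn_sineSeries_zero (ha : Summable fun k => |a k|)
    (h : EqOn (sineSeries a) 0 (Icc 0 π)) : a.Even := by
  intro m
  rcases eq_or_ne m 0 with rfl | hm
  · rw [neg_zero]
  have hzero : ∫ x in (0 : ℝ)..π, sineSeries a x * sin (m * x) = 0 :=
    intervalIntegral.integral_zero_ae <| .of_forall fun x hx => by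
      rw [h (Ioc_subset_Icc_self (by simpa [pi_pos.le] using hx)), Pi.zero_apply, zero_mul]
  rw [integral_sineSeries_mul_sin ha hm] at hzero
  linarith [(mul_eq_zero.mp hzero).resolve_left (by positivity)]

end SineSeries

section ExpSeries

variable {a : ℤ → ℝ}

noncomputable def expSeries (a : ℤ → ℝ) (ω : ℝ) : ℂ :=
  ∑' k : ℤ, (a k : ℂ) * Complex.exp (-Complex.I * (k : ℂ) * (ω : ℂ))

theorem exp_neg_I_int_mul (k : ℤ) (ω : ℝ) :
    Complex.exp (-Complex.I * (k : ℂ) * (ω : ℂ)) =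
      Complex.exp (((-(k * ω) : ℝ) : ℂ) * Complex.I) := by
  push_cast
  ring_nf

theorem norm_ofReal_mul_exp_neg_I_int_mul (c : ℝ) (k : ℤ) (ω : ℝ) :
    ‖(c : ℂ) * Complex.exp (-Complex.I * (k : ℂ) * (ω : ℂ))‖ = |c| := by
  rw [exp_neg_I_int_mul, norm_mul, Complex.norm_exp_ofReal_mul_I, mul_one, Complex.norm_real,
    Real.norm_eq_abs]

theorem im_ofReal_mul_exp_neg_I_int_mul (c : ℝ) (k : ℤ) (ω : ℝ) :
    ((c : ℂ) * Complex.exp (-Complex.I * (k : ℂ) * (ω : ℂ))).im = -(c * sin (k * ω)) := by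
  rw [exp_neg_I_int_mul, Complex.im_ofReal_mul, Complex.exp_ofReal_mul_I_im, sin_neg, mul_neg]

theorem summable_ofReal_mul_exp_neg_I_int_mul (ha : Summable fun k => |a k|) (ω : ℝ) :
    Summable fun k : ℤ => (a k : ℂ) * Complex.exp (-Complex.I * (k : ℂ) * (ω : ℂ)) :=
  .of_norm <| by simpa only [norm_ofReal_mul_exp_neg_I_int_mul] using ha

theorem continuous_expSeries (ha : Summable fun k => |a k|) : Continuous (expSeries a) :=
  continuous_tsum (fun _ => by fun_prop) ha fun k ω =>
    (norm_ofReal_mul_exp_neg_I_int_mul (a k) k ω).le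

theorem im_expSeries (ha : Summable fun k => |a k|) (ω : ℝ) :
    (expSeries a ω).im = -sineSeries a ω := by
  rw [expSeries, Complex.im_tsum (summable_ofReal_mul_exp_neg_I_int_mul ha ω), sineSeries,
    ← tsum_neg]
  simp only [im_ofReal_mul_exp_neg_I_int_mul]

theorem im_integral_expSeries (ha : Summable fun k => |a k|) (s t : ℝ) :
    (∫ ω in s..t, expSeries a ω).im = -∫ ω in s..t, sineSeries a ω := by
  rw [← intervalIntegral.integral_neg, ← Complex.imCLM_apply,
    ← Complex.imCLM.intervalIntegral_comp_comm ((continuous_expSeries ha).intervalIntegrable s t)]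
  simp only [Complex.imCLM_apply, im_expSeries ha]

end ExpSeries

/-- For an absolutely summable real sequence `γ : ℤ → ℝ`,
`f ω = (1/(2π)) ∑_{k∈ℤ} γ k e^{-ikω}` and `𝔉 λ = ∫_0^λ f`, the imaginary part of `𝔉`
vanishes on `[0, π]` if and only if `γ k = γ (-k)` for all `k`. -/
theorem stmt2 (γ : ℤ → ℝ) (hγ : Summable fun k : ℤ => |γ k|)
    (f : ℝ → ℂ)
    (hf : ∀ ω : ℝ, f ω =
      (1 / (2 * π)) * ∑' k : ℤ, (γ k : ℂ) * Complex.exp (-Complex.I * ((k : ℤ) : ℂ) * (ω : ℂ)))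
    (𝔉 : ℝ → ℂ)
    (hF : ∀ lam : ℝ, 𝔉 lam = ∫ ω in (0 : ℝ)..lam, f ω) :
    (∀ lam ∈ Set.Icc (0 : ℝ) π, (𝔉 lam).im = 0) ↔ (∀ k : ℤ, γ k = γ (-k)) := by
  have hIm : ∀ lam, (𝔉 lam).im = -(1 / (2 * π)) * ∫ ω in (0 : ℝ)..lam, sineSeries γ ω := by
    intro lam
    have hf' : f = fun ω => ((1 / (2 * π) : ℝ) : ℂ) * expSeries γ ω := by
      ext1 ω
      rw [hf, expSeries]
      push_cast
      rfl
    rw [hF, hf', intervalIntegral.integral_const_mul, Complex.im_ofReal_mul,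
      im_integral_expSeries hγ, mul_neg, neg_mul]
  have hscale : -(1 / (2 * π)) ≠ 0 := by simp [pi_ne_zero]
  simp_rw [hIm, mul_eq_zero, hscale, false_or]
  constructor
  · intro hvan k
    exact (even_of_eqOn_sineSeries_zero hγ
      (eqOn_zero_of_forall_intervalIntegral_eq_zero (continuous_sineSeries hγ) pi_pos hvan) k).symm
  · intro hsym lam _
    simp [sineSeries_eq_zero_of_even fun k => (hsym k).symm]
end

section
/- Fix an integer n ≥ 1 and λ ∈ [0, π], and for k ∈ ℤ define the weight w_{n,λ}(k) := (2π/n) ∑_{s=1}^{n−1} 1{2πs/n ≤ λ} · e^{-2πiks/n} ∈ ℂ. Then: (i) |w_{n,λ}(0)| ≤ π; (ii) for every k ∈ ℤ with 1 ≤ |k| ≤ n/2, |w_{n,λ}(k)| ≤ 2π/|k|; and (iii) for every k ∈ ℤ with n/2 < |k| ≤ n − 1, |w_{n,λ}(k)| ≤ 2π/(n − |k|). -/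
/-!
Writing `z = exp(-2πik/n)`, the weight is `(2π/n) ∑_{s=1}^{M} z^s` with `M` the last index
satisfying `2πs/n ≤ λ`. For `k = 0` this is at most `(2π/n) · λn/(2π) = λ`. Otherwise the geometric sum is
bounded by `2 / |z - 1| = 1 / |sin(πk/n)|`, and Jordan's inequality `sin x ≥ 2x/π` on `[0, π/2]`
gives `|w(k)| ≤ π/|k|` for `2|k| ≤ n`. Since `w` is `n`-periodic in `k`, a lag with `n/2 < |k| < n`
has the same weight as the lag `n - |k|`.
-/

open Real

/-- The lag-window weight `w_{n,λ}(k) = (2π/n) ∑_{s=1}^{n-1} 1{2πs/n ≤ λ} e^{-2πiks/n}`. -/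
noncomputable def lagWeight (n : ℕ) (lam : ℝ) (k : ℤ) : ℂ :=
  (2 * π / n) * ∑ s ∈ Finset.Icc 1 (n - 1),
    (if 2 * π * s / n ≤ lam then
      Complex.exp (-2 * π * Complex.I * ((k : ℤ) : ℂ) * (s : ℂ) / (n : ℂ)) else 0)

open Finset Complex

lemma norm_geom_sum_Ico_mul_norm_sub_one_le {R : Type*} [NormedDivisionRing R]
    {z : R} (hz : ‖z‖ ≤ 1) (a b : ℕ) :
    ‖∑ i ∈ Ico a b, z ^ i‖ * ‖z - 1‖ ≤ 2 := by
  rcases le_total a b with hab | hba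
  · rw [← norm_mul, geom_sum_Ico_mul z hab]
    calc ‖z ^ b - z ^ a‖ ≤ ‖z ^ b‖ + ‖z ^ a‖ := norm_sub_le _ _
      _ ≤ 1 + 1 := by
        rw [norm_pow, norm_pow]
        exact add_le_add (pow_le_one₀ (norm_nonneg z) hz) (pow_le_one₀ (norm_nonneg z) hz)
      _ = 2 := one_add_one_eq_two
  · simp [Ico_eq_empty_of_le hba]

lemma two_div_pi_mul_abs_le_abs_sin {x : ℝ} (hx : |x| ≤ π / 2) : 2 / π * |x| ≤ |Real.sin x| := by
  rw [abs_sin_eq_sin_abs_of_abs_le_pi (hx.trans (by linarith [pi_pos]))]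
  exact mul_le_sin (abs_nonneg x) hx

noncomputable def lagCutoff (n : ℕ) (lam : ℝ) : ℕ := min (n - 1) ⌊lam * n / (2 * π)⌋₊

lemma filter_Icc_eq_Icc_lagCutoff (n : ℕ) (lam : ℝ) :
    (Icc 1 (n - 1)).filter (fun s : ℕ => 2 * π * s / n ≤ lam) = Icc 1 (lagCutoff n lam) := by
  ext s
  simp only [mem_filter, mem_Icc, lagCutoff, le_min_iff]
  refine ⟨fun ⟨⟨hs, hsn⟩, hlam⟩ => ⟨hs, hsn, ?_⟩, fun ⟨hs, hsn, hfloor⟩ => ⟨⟨hs, hsn⟩, ?_⟩⟩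
  all_goals
    have hn : (0 : ℝ) < n := by norm_cast; omega
    have h2π : (0 : ℝ) < 2 * π := by positivity
  · rw [Nat.le_floor_iff' (by omega), le_div_iff₀ h2π]
    rw [div_le_iff₀ hn] at hlam
    linarith
  · rw [Nat.le_floor_iff' (by omega), le_div_iff₀ h2π] at hfloor
    rw [div_le_iff₀ hn]
    linarith

lemma lagCutoff_le {lam : ℝ} (hlam : 0 ≤ lam) (n : ℕ) :
    (lagCutoff n lam : ℝ) ≤ lam * n / (2 * π) :=
  (Nat.cast_le.2 (min_le_right _ _)).trans (Nat.floor_le (by positivity))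

lemma lagWeight_eq_geom_sum (n : ℕ) (lam : ℝ) (k : ℤ) :
    lagWeight n lam k = ((2 * π / n : ℝ) : ℂ) *
      ∑ s ∈ Icc 1 (lagCutoff n lam), exp (I * (-2 * π * k / n : ℝ)) ^ s := by
  rw [lagWeight, ← sum_filter, filter_Icc_eq_Icc_lagCutoff]
  push_cast
  congr 1
  refine sum_congr rfl fun s _ => ?_
  rw [← Complex.exp_nat_mul]
  congr 1
  ring

lemma norm_lagWeight (n : ℕ) (lam : ℝ) (k : ℤ) :
    ‖lagWeight n lam k‖ =
      2 * π / n * ‖∑ s ∈ Icc 1 (lagCutoff n lam), exp (I * (-2 * π * k / n : ℝ)) ^ s‖ := by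
  rw [lagWeight_eq_geom_sum, norm_mul, norm_real, Real.norm_of_nonneg (by positivity)]

lemma norm_lagWeight_zero_le {lam : ℝ} (hlam : 0 ≤ lam) (n : ℕ) : ‖lagWeight n lam 0‖ ≤ lam := by
  rcases n.eq_zero_or_pos with rfl | hn
  · simpa [lagWeight] using hlam
  have hn : (0 : ℝ) < n := by exact_mod_cast hn
  simp only [norm_lagWeight, Int.cast_zero, mul_zero, zero_div, ofReal_zero, Complex.exp_zero,
    one_pow, sum_const, Nat.card_Icc, add_tsub_cancel_right, nsmul_one, Complex.norm_natCast]
  calc 2 * π / n * lagCutoff n lam ≤ 2 * π / n * (lam * n / (2 * π)) := by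
        gcongr; exact lagCutoff_le hlam n
    _ = lam := by field_simp

lemma norm_lagWeight_le (n : ℕ) (lam : ℝ) {k : ℤ} (hk : k ≠ 0) (hkn : 2 * |k| ≤ n) :
    ‖lagWeight n lam k‖ ≤ π / |k| := by
  set z := exp (I * (-2 * π * k / n : ℝ))
  have hk : 0 < |(k : ℝ)| := by positivity
  have hkn : 2 * |(k : ℝ)| ≤ n := by exact_mod_cast hkn
  have hn : (0 : ℝ) < n := by linarith
  have hchord : 4 * |(k : ℝ)| / n ≤ ‖z - 1‖ := by
    rw [norm_exp_I_mul_ofReal_sub_one, norm_mul, Real.norm_two, Real.norm_eq_abs,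
      show -2 * π * k / n / 2 = -(π * k / n) by ring, Real.sin_neg, abs_neg]
    have hsin := two_div_pi_mul_abs_le_abs_sin (x := π * k / n) (by
      rw [abs_div, abs_mul, abs_of_pos pi_pos, Nat.abs_cast, div_le_iff₀ hn]
      nlinarith [pi_pos])
    rw [abs_div, abs_mul, abs_of_pos pi_pos, Nat.abs_cast] at hsin
    calc 4 * |(k : ℝ)| / n = 2 * (2 / π * (π * |(k : ℝ)| / n)) := by field_simp; ring
      _ ≤ 2 * |Real.sin (π * k / n)| := by gcongr
  have hgeom : ‖∑ s ∈ Icc 1 (lagCutoff n lam), z ^ s‖ * ‖z - 1‖ ≤ 2 := by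
    rw [← Finset.Ico_add_one_right_eq_Icc]
    exact norm_geom_sum_Ico_mul_norm_sub_one_le (norm_exp_I_mul_ofReal _).le _ _
  have hchord_pos : 0 < ‖z - 1‖ := lt_of_lt_of_le (by positivity) hchord
  rw [norm_lagWeight, Int.cast_abs]
  calc 2 * π / n * ‖∑ s ∈ Icc 1 (lagCutoff n lam), z ^ s‖
      ≤ 2 * π / n * (2 / ‖z - 1‖) := by
        gcongr
        rwa [le_div_iff₀ hchord_pos]
    _ ≤ 2 * π / n * (2 / (4 * |(k : ℝ)| / n)) := by gcongr
    _ = π / |(k : ℝ)| := by field_simp; ring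

lemma lagWeight_add_mul_self (n : ℕ) (lam : ℝ) (k m : ℤ) :
    lagWeight n lam (k + m * n) = lagWeight n lam k := by
  rcases eq_or_ne n 0 with rfl | hn
  · simp
  have hz : exp (I * (-2 * π * (k + m * n : ℤ) / n : ℝ)) = exp (I * (-2 * π * k / n : ℝ)) := by
    rw [exp_eq_exp_iff_exists_int]
    refine ⟨-m, ?_⟩
    push_cast
    field_simp
    ring
  simp only [lagWeight_eq_geom_sum, hz]

theorem stmt4_general (n : ℕ) (lam : ℝ) (hlam : lam ∈ Set.Icc (0 : ℝ) π) :
    ‖lagWeight n lam 0‖ ≤ π ∧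
    (∀ k : ℤ, 1 ≤ |k| → ((|k| : ℤ) : ℝ) ≤ (n : ℝ) / 2 →
      ‖lagWeight n lam k‖ ≤ 2 * π / ((|k| : ℤ) : ℝ)) ∧
    (∀ k : ℤ, (n : ℝ) / 2 < ((|k| : ℤ) : ℝ) → |k| ≤ (n : ℤ) - 1 →
      ‖lagWeight n lam k‖ ≤ 2 * π / ((n : ℝ) - ((|k| : ℤ) : ℝ))) := by
  have low_lag (k : ℤ) (hk : 1 ≤ |k|) (hkn : 2 * |k| ≤ n) :
      ‖lagWeight n lam k‖ ≤ 2 * π / ((|k| : ℤ) : ℝ) := by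
    calc ‖lagWeight n lam k‖ ≤ π / |k| := norm_lagWeight_le n lam (abs_pos.1 (by omega)) hkn
      _ ≤ 2 * π / |k| := by gcongr; linarith [pi_pos]
  refine ⟨(norm_lagWeight_zero_le hlam.1 n).trans hlam.2, fun k hk hkn => low_lag k hk ?_,
    fun k hkn hk => ?_⟩
  · exact_mod_cast (by linarith : (2 * |k| : ℝ) ≤ n)
  obtain ⟨m, hm⟩ : ∃ m : ℤ, |k + m * n| = n - |k| := by
    rcases le_or_gt 0 k with h | h
    · rw [abs_of_nonneg h] at hk ⊢
      exact ⟨-1, by rw [abs_of_nonpos (by omega)]; ring⟩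
    · rw [abs_of_neg h] at hk ⊢
      exact ⟨1, by rw [abs_of_nonneg (by omega)]; ring⟩
  have hkn : n < 2 * |k| := by exact_mod_cast (by linarith : (n : ℝ) < 2 * |k|)
  rw [← lagWeight_add_mul_self n lam k m,
    show (n : ℝ) - |k| = |k + m * n| by exact_mod_cast hm.symm]
  exact low_lag _ (by omega) (by omega)

/-- bounds on the lag-window weights: `|w_{n,λ}(0)| ≤ π`;
`|w_{n,λ}(k)| ≤ 2π/|k|` for `1 ≤ |k| ≤ n/2`; and `|w_{n,λ}(k)| ≤ 2π/(n - |k|)` for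
`n/2 < |k| ≤ n - 1`. -/
theorem stmt4 (n : ℕ) (hn : 1 ≤ n) (lam : ℝ) (hlam : lam ∈ Set.Icc (0 : ℝ) π) :
    ‖lagWeight n lam 0‖ ≤ π ∧
    (∀ k : ℤ, 1 ≤ |k| → ((|k| : ℤ) : ℝ) ≤ (n : ℝ) / 2 →
      ‖lagWeight n lam k‖ ≤ 2 * π / ((|k| : ℤ) : ℝ)) ∧
    (∀ k : ℤ, (n : ℝ) / 2 < ((|k| : ℤ) : ℝ) → |k| ≤ (n : ℤ) - 1 →
      ‖lagWeight n lam k‖ ≤ 2 * π / ((n : ℝ) - ((|k| : ℤ) : ℝ))) :=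
  stmt4_general n lam hlam
end

section
/- Let q ≥ 1 be an integer and ρ ∈ (0, 1). Then there exists a constant K < ∞ such that for every ε > 0, ∑_{m=0}^{∞} m^{q−1} · min(ε, ρ^m) ≤ K · ε · (1 + |log ε|)^q. -/
open Real
set_option maxHeartbeats 1000000

/-- for an integer `q ≥ 1` and `ρ ∈ (0,1)` there is a constant `K` such that
for every `ε > 0`, `∑_{m=0}^∞ m^{q-1} min(ε, ρ^m) ≤ K ε (1 + |log ε|)^q`. -/
theorem stmt7 (q : ℕ) (hq : 1 ≤ q) (ρ : ℝ) (hρ : ρ ∈ Set.Ioo (0 : ℝ) 1) :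
    ∃ K : ℝ, ∀ ε : ℝ, 0 < ε →
      ∑' m : ℕ, (m : ℝ) ^ (q - 1) * min ε (ρ ^ m) ≤ K * ε * (1 + |Real.log ε|) ^ q := by
  obtain ⟨hρ0, hρ1⟩ := hρ
  have hq1 : q - 1 + 1 = q := Nat.succ_pred_eq_of_pos hq
  have hρn : ‖ρ‖ < 1 := by rw [Real.norm_eq_abs, abs_of_pos hρ0]; exact hρ1
  have hgs : Summable (fun n : ℕ => (n : ℝ) ^ (q - 1) * ρ ^ n) :=
    summable_pow_mul_geometric_of_norm_lt_one (q - 1) hρn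
  have hCs : Summable (fun i : ℕ => ((i : ℝ) + 1) ^ (q - 1) * ρ ^ i) := by
    have h1 : Summable (fun i : ℕ => ((i + 1 : ℕ) : ℝ) ^ (q - 1) * ρ ^ (i + 1)) :=
      (summable_nat_add_iff 1).2 hgs
    have h2 := h1.mul_left ρ⁻¹
    refine h2.congr fun i => ?_
    push_cast
    rw [pow_succ]
    field_simp
  set C := ∑' i : ℕ, ((i : ℝ) + 1) ^ (q - 1) * ρ ^ i with hCdef
  have hC0 : 0 ≤ C := tsum_nonneg fun i => by positivity
  have hlogρ : Real.log ρ < 0 := Real.log_neg hρ0 hρ1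
  set c := -Real.log ρ with hcdef
  have hc : 0 < c := by simp [hcdef]; linarith
  set B := max (1 / c) 2 with hBdef
  have hB2 : (2 : ℝ) ≤ B := le_max_right _ _
  have hB1 : 1 / c ≤ B := le_max_left _ _
  have hB0 : (0 : ℝ) < B := lt_of_lt_of_le two_pos hB2
  refine ⟨(1 + C) * B ^ q, fun ε hε => ?_⟩
  set L := |Real.log ε| with hLdef
  have hL0 : (0 : ℝ) ≤ L := abs_nonneg _
  set M := ⌈L / c⌉₊ with hMdef
  have hmin0 : ∀ m : ℕ, 0 ≤ min ε (ρ ^ m) :=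
    fun m => le_min hε.le (pow_nonneg hρ0.le m)
  -- ρ ^ M ≤ ε
  have hρM : ρ ^ M ≤ ε := by
    have h1 : L / c ≤ (M : ℝ) := Nat.le_ceil _
    have h2 : L ≤ c * M := by
      rw [div_le_iff₀ hc] at h1; linarith
    have h3 : (M : ℝ) * Real.log ρ ≤ Real.log ε := by
      have h4 := neg_abs_le (Real.log ε)
      have : -(c * M) ≤ Real.log ε := by
        rw [hLdef] at h2; linarith
      rw [hcdef] at this; linarith
    calc ρ ^ M = Real.exp ((M : ℝ) * Real.log ρ) := by
          rw [← Real.exp_log hρ0, ← Real.exp_nat_mul, Real.exp_log hρ0]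
      _ ≤ Real.exp (Real.log ε) := Real.exp_le_exp.2 h3
      _ = ε := Real.exp_log hε
  have hfs : Summable (fun m : ℕ => (m : ℝ) ^ (q - 1) * min ε (ρ ^ m)) := by
    refine Summable.of_nonneg_of_le
      (fun m => mul_nonneg (by positivity) (hmin0 m)) (fun m => ?_) hgs
    exact mul_le_mul_of_nonneg_left (min_le_right _ _) (by positivity)
  have hsplit := Summable.sum_add_tsum_nat_add M hfs
  -- head bound
  have hhead : ∑ m ∈ Finset.range M, (m : ℝ) ^ (q - 1) * min ε (ρ ^ m)
      ≤ (M : ℝ) ^ q * ε := by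
    calc ∑ m ∈ Finset.range M, (m : ℝ) ^ (q - 1) * min ε (ρ ^ m)
        ≤ ∑ _m ∈ Finset.range M, (M : ℝ) ^ (q - 1) * ε := by
          refine Finset.sum_le_sum fun m hm => ?_
          have hmM : (m : ℝ) ≤ M := Nat.cast_le.2 (Finset.mem_range.1 hm).le
          exact mul_le_mul (pow_le_pow_left₀ (Nat.cast_nonneg m) hmM _)
            (min_le_left _ _) (hmin0 m) (by positivity)
      _ = (M : ℝ) * ((M : ℝ) ^ (q - 1) * ε) := by
          rw [Finset.sum_const, Finset.card_range, nsmul_eq_mul]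
      _ = (M : ℝ) ^ q * ε := by
          rw [← mul_assoc, ← pow_succ', hq1]
  -- tail bound
  have htail : ∑' i : ℕ, ((i + M : ℕ) : ℝ) ^ (q - 1) * min ε (ρ ^ (i + M))
      ≤ ((M : ℝ) + 1) ^ (q - 1) * ρ ^ M * C := by
    have hrs : Summable (fun i : ℕ =>
        ((M : ℝ) + 1) ^ (q - 1) * ρ ^ M * (((i : ℝ) + 1) ^ (q - 1) * ρ ^ i)) :=
      hCs.mul_left _
    calc ∑' i : ℕ, ((i + M : ℕ) : ℝ) ^ (q - 1) * min ε (ρ ^ (i + M))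
        ≤ ∑' i : ℕ, ((M : ℝ) + 1) ^ (q - 1) * ρ ^ M * (((i : ℝ) + 1) ^ (q - 1) * ρ ^ i) := by
          refine Summable.tsum_le_tsum (fun i => ?_) ((summable_nat_add_iff M).2 hfs) hrs
          have h1 : ((i : ℝ) + M) ^ (q - 1) ≤ ((i : ℝ) + 1) ^ (q - 1) * ((M : ℝ) + 1) ^ (q - 1) := by
            rw [← mul_pow]
            refine pow_le_pow_left₀ (by positivity) ?_ _
            nlinarith [Nat.cast_nonneg (α := ℝ) i, Nat.cast_nonneg (α := ℝ) M]
          have h2 : min ε (ρ ^ (i + M)) ≤ ρ ^ i * ρ ^ M := by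
            rw [← pow_add]; exact min_le_right _ _
          calc ((i + M : ℕ) : ℝ) ^ (q - 1) * min ε (ρ ^ (i + M))
              = ((i : ℝ) + M) ^ (q - 1) * min ε (ρ ^ (i + M)) := by push_cast; ring_nf
            _ ≤ (((i : ℝ) + 1) ^ (q - 1) * ((M : ℝ) + 1) ^ (q - 1)) * (ρ ^ i * ρ ^ M) :=
                mul_le_mul h1 h2 (hmin0 _) (by positivity)
            _ = ((M : ℝ) + 1) ^ (q - 1) * ρ ^ M * (((i : ℝ) + 1) ^ (q - 1) * ρ ^ i) := by ring
      _ = ((M : ℝ) + 1) ^ (q - 1) * ρ ^ M * C := tsum_mul_left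
  -- combine
  have hM1 : (1 : ℝ) ≤ (M : ℝ) + 1 := le_add_of_nonneg_left (Nat.cast_nonneg M)
  have hMp : (M : ℝ) ^ q ≤ ((M : ℝ) + 1) ^ q :=
    pow_le_pow_left₀ (Nat.cast_nonneg M) (by linarith) q
  have hMq : ((M : ℝ) + 1) ^ (q - 1) ≤ ((M : ℝ) + 1) ^ q :=
    pow_le_pow_right₀ hM1 (Nat.sub_le q 1)
  have hMB : (M : ℝ) + 1 ≤ B * (1 + L) := by
    have h1 : (M : ℝ) < L / c + 1 := Nat.ceil_lt_add_one (by positivity)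
    have h2 : L / c ≤ B * L := by
      rw [div_eq_mul_inv, mul_comm]
      exact mul_le_mul_of_nonneg_right (by rw [← one_div]; exact hB1) hL0
    nlinarith
  have htotal : ∑' m : ℕ, (m : ℝ) ^ (q - 1) * min ε (ρ ^ m)
      ≤ (1 + C) * (((M : ℝ) + 1) ^ q * ε) := by
    rw [← hsplit]
    have ht2 : ((M : ℝ) + 1) ^ (q - 1) * ρ ^ M * C ≤ ((M : ℝ) + 1) ^ q * ε * C := by
      refine mul_le_mul_of_nonneg_right ?_ hC0
      exact mul_le_mul hMq hρM (pow_nonneg hρ0.le _) (by positivity)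
    have ht1 : (M : ℝ) ^ q * ε ≤ ((M : ℝ) + 1) ^ q * ε :=
      mul_le_mul_of_nonneg_right hMp hε.le
    nlinarith [hhead, htail]
  calc ∑' m : ℕ, (m : ℝ) ^ (q - 1) * min ε (ρ ^ m)
      ≤ (1 + C) * (((M : ℝ) + 1) ^ q * ε) := htotal
    _ ≤ (1 + C) * ((B * (1 + L)) ^ q * ε) := by
        refine mul_le_mul_of_nonneg_left (mul_le_mul_of_nonneg_right ?_ hε.le) (by linarith)
        exact pow_le_pow_left₀ (by positivity) hMB q
    _ = (1 + C) * B ^ q * ε * (1 + L) ^ q := by rw [mul_pow]; ring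
end

section
/- Let f : ℝ → ℝ have bounded variation on the interval [0, 2π], with total variation V := eVariationOn f [0, 2π] < ∞, and suppose f is integrable on [0, 2π]. Then for every integer n ≥ 1, |∫_0^{2π} f(ω) dω − (2π/n) ∑_{j=1}^{n} f(2πj/n)| ≤ (2π/n) · V. -/
/-!
On a cell `[x k, x (k + 1)]` of the partition, `f` stays within the variation of `f` over that
cell of its right-endpoint value, so the cell error is at most the cell length times that
variation; the variations over the cells add up to the total variation.
-/

open Real MeasureTheory Set

theorem BoundedVariationOn.intervalIntegrable {f : ℝ → ℝ} {a b : ℝ}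
    (hf : BoundedVariationOn f (uIcc a b)) : IntervalIntegrable f volume a b := by
  obtain ⟨p, q, hp, hq, rfl⟩ := hf.locallyBoundedVariationOn.exists_monotoneOn_sub_monotoneOn
  exact hp.intervalIntegrable.sub hq.intervalIntegrable

theorem BoundedVariationOn.abs_intervalIntegral_sub_mul_right_le {f : ℝ → ℝ} {a b : ℝ}
    (hab : a ≤ b) (hf : BoundedVariationOn f (Icc a b)) :
    |(∫ t in a..b, f t) - (b - a) * f b| ≤ (b - a) * (eVariationOn f (Icc a b)).toReal := by
  have hint : IntervalIntegrable f volume a b :=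
    BoundedVariationOn.intervalIntegrable (by rwa [uIcc_of_le hab])
  have hosc : ∀ t ∈ uIoc a b, ‖f t - f b‖ ≤ (eVariationOn f (Icc a b)).toReal := by
    intro t ht
    rw [uIoc_of_le hab] at ht
    exact hf.dist_le (Ioc_subset_Icc_self ht) (right_mem_Icc.2 hab)
  calc |(∫ t in a..b, f t) - (b - a) * f b| = ‖∫ t in a..b, (f t - f b)‖ := by
        rw [intervalIntegral.integral_sub hint intervalIntegrable_const,
          intervalIntegral.integral_const, smul_eq_mul, Real.norm_eq_abs]
    _ ≤ (eVariationOn f (Icc a b)).toReal * |b - a| :=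
        intervalIntegral.norm_integral_le_of_norm_le_const hosc
    _ = (b - a) * (eVariationOn f (Icc a b)).toReal := by
        rw [abs_of_nonneg (sub_nonneg.2 hab), mul_comm]

theorem BoundedVariationOn.abs_intervalIntegral_sub_riemannSum_le {f : ℝ → ℝ} {x : ℕ → ℝ}
    (hx : Monotone x) {n : ℕ} {δ : ℝ} (hδ : ∀ k < n, x (k + 1) - x k ≤ δ)
    (hf : BoundedVariationOn f (Icc (x 0) (x n))) :
    |(∫ t in x 0..x n, f t) - ∑ k ∈ Finset.range n, (x (k + 1) - x k) * f (x (k + 1))| ≤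
      δ * (eVariationOn f (Icc (x 0) (x n))).toReal := by
  have hpiece : ∀ k < n, BoundedVariationOn f (Icc (x k) (x (k + 1))) := fun k hk =>
    hf.mono (Icc_subset_Icc (hx k.zero_le) (hx hk))
  have hint : ∀ k < n, IntervalIntegrable f volume (x k) (x (k + 1)) := fun k hk =>
    BoundedVariationOn.intervalIntegrable (by rw [uIcc_of_le (hx k.le_succ)]; exact hpiece k hk)
  have hvar : ∑ k ∈ Finset.range n, (eVariationOn f (Icc (x k) (x (k + 1)))).toReal =
      (eVariationOn f (Icc (x 0) (x n))).toReal := by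
    rw [← ENNReal.toReal_sum fun k hk => hpiece k (Finset.mem_range.1 hk),
      eVariationOn.sum' f hx]
  rw [← intervalIntegral.sum_integral_adjacent_intervals hint, ← Finset.sum_sub_distrib]
  calc _ ≤ ∑ k ∈ Finset.range n,
        |(∫ t in x k..x (k + 1), f t) - (x (k + 1) - x k) * f (x (k + 1))| :=
        Finset.abs_sum_le_sum_abs _ _
    _ ≤ ∑ k ∈ Finset.range n, δ * (eVariationOn f (Icc (x k) (x (k + 1)))).toReal := by
        refine Finset.sum_le_sum fun k hk => ?_
        rw [Finset.mem_range] at hk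
        exact ((hpiece k hk).abs_intervalIntegral_sub_mul_right_le (hx k.le_succ)).trans
          (by gcongr; exact hδ k hk)
    _ = δ * (eVariationOn f (Icc (x 0) (x n))).toReal := by rw [← Finset.mul_sum, hvar]

theorem stmt9_general (f : ℝ → ℝ)
    (hV : eVariationOn f (Set.Icc 0 (2 * π)) ≠ ⊤) :
    ∀ n : ℕ, 1 ≤ n →
      |(∫ ω in (0 : ℝ)..(2 * π), f ω) -
          (2 * π / n) * ∑ j ∈ Finset.Icc 1 n, f (2 * π * j / n)| ≤
        (2 * π / n) * (eVariationOn f (Set.Icc 0 (2 * π))).toReal := by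
  intro n hn
  have hn0 : (n : ℝ) ≠ 0 := by positivity
  set x : ℕ → ℝ := fun k => 2 * π * k / n
  have hx : Monotone x := fun a b hab => by dsimp only [x]; gcongr
  have hgap : ∀ k, x (k + 1) - x k = 2 * π / n := fun k => by
    dsimp only [x]; push_cast; field_simp; ring
  have hx0 : x 0 = 0 := by simp [x]
  have hxn : x n = 2 * π := mul_div_cancel_right₀ _ hn0
  have hsum : ∑ k ∈ Finset.range n, (x (k + 1) - x k) * f (x (k + 1)) =
      (2 * π / n) * ∑ j ∈ Finset.Icc 1 n, f (2 * π * j / n) := by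
    simp only [hgap, ← Finset.mul_sum, Finset.range_eq_Ico, Finset.sum_Ico_add' (fun j => f (x j)),
      zero_add, Finset.Ico_add_one_right_eq_Icc, x]
  have key := BoundedVariationOn.abs_intervalIntegral_sub_riemannSum_le (f := f) (n := n) hx
    (fun k _ => (hgap k).le) (by rwa [hx0, hxn])
  rwa [hsum, hx0, hxn] at key

/-- right-endpoint Riemann-sum error bound for a function of bounded
variation on `[0, 2π]`: for every `n ≥ 1`,
`|∫_0^{2π} f - (2π/n) ∑_{j=1}^n f(2πj/n)| ≤ (2π/n) V` where `V` is the total variation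
of `f` on `[0, 2π]`. -/
theorem stmt9 (f : ℝ → ℝ)
    (hV : eVariationOn f (Set.Icc 0 (2 * π)) ≠ ⊤)
    (hint : IntegrableOn f (Set.Icc 0 (2 * π))) :
    ∀ n : ℕ, 1 ≤ n →
      |(∫ ω in (0 : ℝ)..(2 * π), f ω) -
          (2 * π / n) * ∑ j ∈ Finset.Icc 1 n, f (2 * π * j / n)| ≤
        (2 * π / n) * (eVariationOn f (Set.Icc 0 (2 * π))).toReal :=
  stmt9_general f hV
end
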